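/- arXiv:0806.0678 — 3 statements merged into one kernel-verified Lean document; each statement's English description precedes it below -/
import Mathlib

section
/- Let (Σ², ḡ) be a closed surface with second fundamental form A in a 3-manifold, and suppose |Å| + diam(Σ)·|∇Å| ≤ ε and the ambient curvature term w_i = R_{0kil}ḡ^{kl} satisfies |w| ≤ δ. Then |∇H| ≤ C(|∇Å| + δ) for a universal constant C, where H = tr A. -/
open Real

set_option maxHeartbeats 1000000 in
/-- Codazzi-type gradient estimate: if `T = ∇A` (components `T k i j`, symmetric in the last
two indices) decomposes as `T = E + F` with `⟨E,F⟩ = 0` and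
`|E|² = (3/5)|∇H|² + |w|² − ⟨w,∇H⟩` (where `(∇H)_k = ∑ i, T k i i` and `w` is the ambient
curvature term with `|w| ≤ δ`), then `|∇H| ≤ C(|∇Å| + δ)` for a universal constant `C`,
where `∇Å` has components `T k i j − (1/2)(∇H)_k δ_{ij}`. -/
theorem stmt_6 :
    ∃ C : ℝ, 0 < C ∧
      ∀ (T E F : Fin 2 → Fin 2 → Fin 2 → ℝ) (w : Fin 2 → ℝ) (δ : ℝ),
        (∀ k i j, T k i j = T k j i) →
        (∀ k i j, T k i j = E k i j + F k i j) →
        (∑ k : Fin 2, ∑ i : Fin 2, ∑ j : Fin 2, E k i j * F k i j) = 0 →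
        (∑ k : Fin 2, ∑ i : Fin 2, ∑ j : Fin 2, (E k i j) ^ 2) =
          (3 / 5) * (∑ k : Fin 2, (∑ i : Fin 2, T k i i) ^ 2) +
            (∑ k : Fin 2, (w k) ^ 2) - ∑ k : Fin 2, w k * (∑ i : Fin 2, T k i i) →
        Real.sqrt (∑ k : Fin 2, (w k) ^ 2) ≤ δ →
        Real.sqrt (∑ k : Fin 2, (∑ i : Fin 2, T k i i) ^ 2) ≤
          C * (Real.sqrt (∑ k : Fin 2, ∑ i : Fin 2, ∑ j : Fin 2,
              (T k i j - (1 / 2) * (∑ l : Fin 2, T k l l) * (if i = j then 1 else 0)) ^ 2) + δ) := by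

  refine ⟨10, by norm_num, ?_⟩
  intro T E F w δ hsym hTEF hEF hE2 hw
  set x := Real.sqrt (∑ k : Fin 2, (∑ i : Fin 2, T k i i) ^ 2) with hxdef
  set a := Real.sqrt (∑ k : Fin 2, ∑ i : Fin 2, ∑ j : Fin 2,
      (T k i j - (1 / 2) * (∑ l : Fin 2, T k l l) * (if i = j then 1 else 0)) ^ 2) with hadef
  have hx0 : 0 ≤ x := Real.sqrt_nonneg _
  have ha0 : 0 ≤ a := Real.sqrt_nonneg _
  have hδ0 : 0 ≤ δ := le_trans (Real.sqrt_nonneg _) hw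
  have hx2 : x ^ 2 = ∑ k : Fin 2, (∑ i : Fin 2, T k i i) ^ 2 :=
    Real.sq_sqrt (by positivity)
  have ha2 : a ^ 2 = ∑ k : Fin 2, ∑ i : Fin 2, ∑ j : Fin 2,
      (T k i j - (1 / 2) * (∑ l : Fin 2, T k l l) * (if i = j then 1 else 0)) ^ 2 :=
    Real.sq_sqrt (by positivity)
  have hwpos : (0:ℝ) ≤ ∑ k : Fin 2, (w k) ^ 2 := by positivity
  have hw2 : (∑ k : Fin 2, (w k) ^ 2) ≤ δ ^ 2 := by
    nlinarith [Real.sq_sqrt hwpos, Real.sqrt_nonneg (∑ k : Fin 2, (w k) ^ 2), hw]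
  -- Cauchy–Schwarz
  have hcs : ∑ k : Fin 2, w k * (∑ i : Fin 2, T k i i) ≤ δ * x := by
    have hsq : (∑ k : Fin 2, w k * (∑ i : Fin 2, T k i i)) ^ 2 ≤ δ ^ 2 * x ^ 2 := by
      rw [hx2]
      simp only [Fin.sum_univ_two]
      simp only [Fin.sum_univ_two] at hw2
      nlinarith [sq_nonneg (w 0 * (T 1 0 0 + T 1 1 1) - w 1 * (T 0 0 0 + T 0 1 1)),
        sq_nonneg (T 0 0 0 + T 0 1 1), sq_nonneg (T 1 0 0 + T 1 1 1), hw2]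
    calc ∑ k : Fin 2, w k * (∑ i : Fin 2, T k i i)
        ≤ |∑ k : Fin 2, w k * (∑ i : Fin 2, T k i i)| := le_abs_self _
      _ = Real.sqrt ((∑ k : Fin 2, w k * (∑ i : Fin 2, T k i i)) ^ 2) :=
          (Real.sqrt_sq_eq_abs _).symm
      _ ≤ Real.sqrt (δ ^ 2 * x ^ 2) := Real.sqrt_le_sqrt hsq
      _ = δ * x := by
          rw [show δ ^ 2 * x ^ 2 = (δ * x) ^ 2 by ring,
            Real.sqrt_sq (mul_nonneg hδ0 hx0)]
  have hT2 : (∑ k : Fin 2, ∑ i : Fin 2, ∑ j : Fin 2, (T k i j) ^ 2) =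
      (∑ k : Fin 2, ∑ i : Fin 2, ∑ j : Fin 2, (E k i j) ^ 2)
      + 2 * (∑ k : Fin 2, ∑ i : Fin 2, ∑ j : Fin 2, E k i j * F k i j)
      + (∑ k : Fin 2, ∑ i : Fin 2, ∑ j : Fin 2, (F k i j) ^ 2) := by
    simp only [Fin.sum_univ_two, hTEF]; ring
  have hF2 : 0 ≤ ∑ k : Fin 2, ∑ i : Fin 2, ∑ j : Fin 2, (F k i j) ^ 2 := by positivity
  have hAnorm : a ^ 2 = (∑ k : Fin 2, ∑ i : Fin 2, ∑ j : Fin 2, (T k i j) ^ 2)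
      - (1 / 2) * (∑ k : Fin 2, (∑ i : Fin 2, T k i i) ^ 2) := by
    rw [ha2]; simp only [Fin.sum_univ_two]; norm_num; ring
  have key : x ^ 2 ≤ 10 * a ^ 2 + 10 * (δ * x) := by
    linarith [hE2, hT2, hF2, hAnorm, hcs, hx2, hEF, hwpos]
  nlinarith [key, mul_nonneg ha0 hδ0, mul_nonneg ha0 hx0, mul_nonneg hδ0 hx0,
    sq_nonneg (x - 4 * a - 10 * δ), sq_nonneg a, sq_nonneg δ]
end

section
/- Let Σ ⊂ ℝ³ be a closed embedded surface bounding a region of volume V, with support function X·n = r₀ + O(r^{1−τ}), mean curvature H₀ = 2/r₀ + O(r^{−1−τ}), Gauss curvature K = 1/r₀² + O(r^{−2−τ}), area comparable to r², and r₀ comparable to r. Then ∫_Σ H₀ dσ = (6V/r₀²) + 8π r₀ − 2Area(Σ)/r₀ + O(r^{1−2τ}), where τ ∈ (1/2, 1]. -/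
open Real MeasureTheory

local notation "E3" => EuclideanSpace ℝ (Fin 3)

/-- For a family of closed surfaces `S r ⊆ ℝ³` enclosing volume `V r`, with support function
`supp = X·n = r₀ + O(r^{1−τ})`, mean curvature `H₀ = 2/r₀ + O(r^{−1−τ})`, Gauss curvature
`K = 1/r₀² + O(r^{−2−τ})`, area comparable to `r²` and `r₀` comparable to `r`, the Minkowski
formula `∫H₀ = 2∫K(X·n)`, the divergence identity `∫(X·n) = 3V` and Gauss–Bonnet `∫K = 4π`
yield `∫_Σ H₀ dσ = 6V/r₀² + 8πr₀ − 2Area/r₀ + O(r^{1−2τ})`. -/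
theorem stmt_12 (τ : ℝ) (hτ : 1 / 2 < τ) (hτ' : τ ≤ 1)
    (S : ℝ → Set E3) (H₀ K supf : ℝ → E3 → ℝ) (V r₀ : ℝ → ℝ)
    (hMink : ∀ r ≥ (1 : ℝ),
      (∫ x in S r, H₀ r x ∂μH[2]) = 2 * ∫ x in S r, K r x * supf r x ∂μH[2])
    (hDiv : ∀ r ≥ (1 : ℝ), (∫ x in S r, supf r x ∂μH[2]) = 3 * V r)
    (hGB : ∀ r ≥ (1 : ℝ), (∫ x in S r, K r x ∂μH[2]) = 4 * π)
    (hsup : ∃ C > (0 : ℝ), ∀ r ≥ (1 : ℝ), ∀ x ∈ S r, |supf r x - r₀ r| ≤ C * r ^ (1 - τ))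
    (hH : ∃ C > (0 : ℝ), ∀ r ≥ (1 : ℝ), ∀ x ∈ S r, |H₀ r x - 2 / r₀ r| ≤ C * r ^ (-1 - τ))
    (hK : ∃ C > (0 : ℝ), ∀ r ≥ (1 : ℝ), ∀ x ∈ S r,
      |K r x - 1 / (r₀ r) ^ 2| ≤ C * r ^ (-2 - τ))
    (hArea : ∃ Λ > (0 : ℝ), ∀ r ≥ (1 : ℝ),
      Λ⁻¹ * r ^ 2 ≤ (μH[2] (S r)).toReal ∧ (μH[2] (S r)).toReal ≤ Λ * r ^ 2)
    (hr₀ : ∃ C > (1 : ℝ), ∀ r ≥ (1 : ℝ), r / C ≤ r₀ r ∧ r₀ r ≤ C * r)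
    (hint : ∀ r ≥ (1 : ℝ), IntegrableOn (H₀ r) (S r) μH[2] ∧
      IntegrableOn (K r) (S r) μH[2] ∧ IntegrableOn (supf r) (S r) μH[2] ∧
      IntegrableOn (fun x => K r x * supf r x) (S r) μH[2]) :
    ∃ C > (0 : ℝ), ∀ r ≥ (1 : ℝ),
      |(∫ x in S r, H₀ r x ∂μH[2]) -
          (6 * V r / (r₀ r) ^ 2 + 8 * π * r₀ r - 2 * (μH[2] (S r)).toReal / r₀ r)| ≤
        C * r ^ (1 - 2 * τ) := by

  obtain ⟨Cs, hCs, hs⟩ := hsup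
  obtain ⟨CK, hCK, hKb⟩ := hK
  obtain ⟨Λ, hΛ, hA⟩ := hArea
  obtain ⟨Cr, hCr, hr0⟩ := hr₀
  refine ⟨2 * CK * Cs * Λ, by positivity, fun r hr => ?_⟩
  have hrpos : (0 : ℝ) < r := lt_of_lt_of_le one_pos hr
  have hAr := hA r hr
  have hr0' := hr0 r hr
  have hr₀pos : 0 < r₀ r := lt_of_lt_of_le (by positivity) hr0'.1
  set μ := (μH[2] : Measure E3)
  set A := (μ (S r)).toReal with hAdef
  have hfin : μ (S r) ≠ ⊤ := by
    intro h
    have : A = 0 := by simp [hAdef, h]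
    have h1 : (0:ℝ) < Λ⁻¹ * r ^ 2 := by positivity
    linarith [hAr.1]
  set c := 1 / (r₀ r) ^ 2 with hc
  set d := r₀ r with hd
  obtain ⟨hiH, hiK, hisup, hiKs⟩ := hint r hr
  have hiconst : IntegrableOn (fun _ : E3 => c * d) (S r) μ :=
    integrableOn_const hfin enorm_ne_top
  have hidK : IntegrableOn (fun x => d * K r x) (S r) μ := hiK.const_mul d
  have hicsup : IntegrableOn (fun x => c * supf r x) (S r) μ := hisup.const_mul c
  have key : (∫ x in S r, (K r x - c) * (supf r x - d) ∂μ) =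
      (∫ x in S r, K r x * supf r x ∂μ) - d * (∫ x in S r, K r x ∂μ)
        - c * (∫ x in S r, supf r x ∂μ) + c * d * A := by
    have heq : ∀ x, (K r x - c) * (supf r x - d)
        = (K r x * supf r x - d * K r x - c * supf r x) + c * d := by
      intro x; ring
    have hi2 : IntegrableOn (fun x => K r x * supf r x - d * K r x) (S r) μ :=
      hiKs.sub hidK
    have hi1 : IntegrableOn
        (fun x => K r x * supf r x - d * K r x - c * supf r x) (S r) μ :=
      hi2.sub hicsup
    simp only [heq]
    rw [integral_add hi1 hiconst, integral_sub hi2 hicsup, integral_sub hiKs hidK,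
      integral_const_mul, integral_const_mul, setIntegral_const]
    simp [hAdef, mul_comm, Measure.real]
  have hEq : (∫ x in S r, H₀ r x ∂μ) -
      (6 * V r / (r₀ r) ^ 2 + 8 * π * r₀ r - 2 * A / r₀ r) =
      2 * ∫ x in S r, (K r x - c) * (supf r x - d) ∂μ := by
    rw [hMink r hr, key, hGB r hr, hDiv r hr]
    have h1 : c * d = 1 / r₀ r := by
      rw [hc, hd]; field_simp
    rw [h1]
    have h2 : (6 : ℝ) * V r / (r₀ r) ^ 2 = 3 * V r * c * 2 := by
      rw [hc, hd]; field_simp; ring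
    rw [h2]
    field_simp
    ring
  rw [hEq, abs_mul, abs_two]
  have hbound : |∫ x in S r, (K r x - c) * (supf r x - d) ∂μ| ≤
      (CK * r ^ (-2 - τ) * (Cs * r ^ (1 - τ))) * A := by
    have := MeasureTheory.norm_setIntegral_le_of_norm_le_const
      (μ := μ) (s := S r) (C := CK * r ^ (-2 - τ) * (Cs * r ^ (1 - τ)))
      (f := fun x => (K r x - c) * (supf r x - d))
      (lt_top_iff_ne_top.2 hfin) ?_
    · rw [Real.norm_eq_abs] at this
      calc |∫ x in S r, (K r x - c) * (supf r x - d) ∂μ|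
          ≤ CK * r ^ (-2 - τ) * (Cs * r ^ (1 - τ)) * (μ (S r)).toReal := this
        _ = _ := rfl
    · intro x hx
      rw [Real.norm_eq_abs, abs_mul]
      exact mul_le_mul (hKb r hr x hx) (hs r hr x hx) (abs_nonneg _)
        (by positivity)
  calc 2 * |∫ x in S r, (K r x - c) * (supf r x - d) ∂μ|
      ≤ 2 * ((CK * r ^ (-2 - τ) * (Cs * r ^ (1 - τ))) * A) := by linarith [hbound]
    _ ≤ 2 * ((CK * r ^ (-2 - τ) * (Cs * r ^ (1 - τ))) * (Λ * r ^ 2)) := by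
        have hnn : (0:ℝ) ≤ CK * r ^ (-2 - τ) * (Cs * r ^ (1 - τ)) := by positivity
        exact mul_le_mul_of_nonneg_left (mul_le_mul_of_nonneg_left hAr.2 hnn) (by norm_num)
    _ = 2 * CK * Cs * Λ * (r ^ (-2 - τ) * r ^ (1 - τ) * r ^ (2:ℕ)) := by ring
    _ = 2 * CK * Cs * Λ * r ^ (1 - 2 * τ) := by
        rw [← Real.rpow_natCast r 2, ← Real.rpow_add hrpos, ← Real.rpow_add hrpos]
        congr 1
        push_cast
        ring
end

section
/- Let Σ ⊂ ℝ³ be a closed embedded surface bounding a region of volume V, with support function X·n = r₀ + O(r^{1−τ}), mean curvature H₀ = 2/r₀ + O(r^{−1−τ}), area comparable to r², and r₀ comparable to r. Then ∫_Σ H₀ dσ = −6V/r₀² + 4Area(Σ)/r₀ + O(r^{1−2τ}). Combined with the identity ∫_Σ H₀ dσ = 6V/r₀² + 8π r₀ − 2Area(Σ)/r₀ + O(r^{1−2τ}), this yields ∫_Σ H₀ dσ = 4π r₀ + Area(Σ)/r₀ + O(r^{1−2τ}). -/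
open Real MeasureTheory

local notation "E3" => EuclideanSpace ℝ (Fin 3)

/-- For a family of closed surfaces `S r ⊆ ℝ³` enclosing volume `V r`, with support function
`X·n = r₀ + O(r^{1−τ})`, mean curvature `H₀ = 2/r₀ + O(r^{−1−τ})`, area comparable to `r²`
and `r₀` comparable to `r`, the Minkowski formula `∫H₀(X·n) = 2Area` and `∫(X·n) = 3V` give
`∫H₀ = −6V/r₀² + 4Area/r₀ + O(r^{1−2τ})`; combined with the identity
`∫H₀ = 6V/r₀² + 8πr₀ − 2Area/r₀ + O(r^{1−2τ})`, this yields
`∫H₀ = 4πr₀ + Area/r₀ + O(r^{1−2τ})`. -/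
theorem stmt_13 (τ : ℝ) (hτ : 1 / 2 < τ) (hτ' : τ ≤ 1)
    (S : ℝ → Set E3) (H₀ supf : ℝ → E3 → ℝ) (V r₀ : ℝ → ℝ)
    (hMink : ∀ r ≥ (1 : ℝ),
      (∫ x in S r, H₀ r x * supf r x ∂μH[2]) = 2 * (μH[2] (S r)).toReal)
    (hDiv : ∀ r ≥ (1 : ℝ), (∫ x in S r, supf r x ∂μH[2]) = 3 * V r)
    (hsup : ∃ C > (0 : ℝ), ∀ r ≥ (1 : ℝ), ∀ x ∈ S r, |supf r x - r₀ r| ≤ C * r ^ (1 - τ))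
    (hH : ∃ C > (0 : ℝ), ∀ r ≥ (1 : ℝ), ∀ x ∈ S r, |H₀ r x - 2 / r₀ r| ≤ C * r ^ (-1 - τ))
    (hArea : ∃ Λ > (0 : ℝ), ∀ r ≥ (1 : ℝ),
      Λ⁻¹ * r ^ 2 ≤ (μH[2] (S r)).toReal ∧ (μH[2] (S r)).toReal ≤ Λ * r ^ 2)
    (hr₀ : ∃ C > (1 : ℝ), ∀ r ≥ (1 : ℝ), r / C ≤ r₀ r ∧ r₀ r ≤ C * r)
    (hint : ∀ r ≥ (1 : ℝ), IntegrableOn (H₀ r) (S r) μH[2] ∧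
      IntegrableOn (supf r) (S r) μH[2] ∧
      IntegrableOn (fun x => H₀ r x * supf r x) (S r) μH[2])
    (hPrev : ∃ C > (0 : ℝ), ∀ r ≥ (1 : ℝ),
      |(∫ x in S r, H₀ r x ∂μH[2]) -
          (6 * V r / (r₀ r) ^ 2 + 8 * π * r₀ r - 2 * (μH[2] (S r)).toReal / r₀ r)| ≤
        C * r ^ (1 - 2 * τ)) :
    (∃ C > (0 : ℝ), ∀ r ≥ (1 : ℝ),
      |(∫ x in S r, H₀ r x ∂μH[2]) -
          (-(6 * V r / (r₀ r) ^ 2) + 4 * (μH[2] (S r)).toReal / r₀ r)| ≤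
        C * r ^ (1 - 2 * τ)) ∧
    (∃ C > (0 : ℝ), ∀ r ≥ (1 : ℝ),
      |(∫ x in S r, H₀ r x ∂μH[2]) -
          (4 * π * r₀ r + (μH[2] (S r)).toReal / r₀ r)| ≤
        C * r ^ (1 - 2 * τ)) := by
  obtain ⟨C₁, hC₁, h1⟩ := hsup
  obtain ⟨C₂, hC₂, h2⟩ := hH
  obtain ⟨Λ, hΛ, hA⟩ := hArea
  obtain ⟨C₀, hC₀, h0⟩ := hr₀
  obtain ⟨Cp, hCp, hp⟩ := hPrev
  have part1 : ∀ r ≥ (1 : ℝ),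
      |(∫ x in S r, H₀ r x ∂μH[2]) -
          (-(6 * V r / (r₀ r) ^ 2) + 4 * (μH[2] (S r)).toReal / r₀ r)| ≤
        (C₀ * C₁ * C₂ * Λ) * r ^ (1 - 2 * τ) := by
    intro r hr
    have hr0 : (0 : ℝ) < r := lt_of_lt_of_le one_pos hr
    have hr₀pos : 0 < r₀ r := lt_of_lt_of_le (div_pos hr0 (lt_trans one_pos hC₀)) (h0 r hr).1
    have hr₀ne : r₀ r ≠ 0 := ne_of_gt hr₀pos
    set A : ℝ := (μH[2] (S r) : ENNReal).toReal with hAdef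
    have hApos : 0 < A := lt_of_lt_of_le (by positivity) (hA r hr).1
    have hfin : μH[2] (S r) < ⊤ := by
      rcases lt_or_ge (μH[2] (S r)) ⊤ with h | h
      · exact h
      · exfalso
        have : μH[2] (S r) = ⊤ := top_le_iff.mp h
        rw [hAdef, this] at hApos
        simp at hApos
    obtain ⟨hiH, hiS, hiHS⟩ := hint r hr
    set I : ℝ := ∫ x in S r, H₀ r x ∂μH[2] with hIdef
    -- the error integral
    set E : ℝ := ∫ x in S r, (H₀ r x - 2 / r₀ r) * (supf r x - r₀ r) ∂μH[2] with hEdef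
    have hiB : IntegrableOn (fun x => r₀ r * H₀ r x) (S r) μH[2] := hiH.const_mul _
    have hiD : IntegrableOn (fun x => (2 / r₀ r) * supf r x) (S r) μH[2] := hiS.const_mul _
    have hiC : IntegrableOn (fun _ : E3 => (2 / r₀ r) * r₀ r) (S r) μH[2] :=
      integrableOn_const hfin.ne
    have hiAB : IntegrableOn (fun x => H₀ r x * supf r x - r₀ r * H₀ r x) (S r) μH[2] :=
      hiHS.sub hiB
    have hiCD : IntegrableOn (fun x => (2 / r₀ r) * supf r x - (2 / r₀ r) * r₀ r) (S r) μH[2] :=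
      hiD.sub hiC
    have hiE : IntegrableOn (fun x => (H₀ r x - 2 / r₀ r) * (supf r x - r₀ r)) (S r) μH[2] := by
      have : (fun x => (H₀ r x - 2 / r₀ r) * (supf r x - r₀ r)) =
          fun x => (H₀ r x * supf r x - r₀ r * H₀ r x) -
            ((2 / r₀ r) * supf r x - (2 / r₀ r) * r₀ r) := by
        funext x; ring
      rw [this]
      exact hiAB.sub hiCD
    -- compute E
    have hEeq : E = 2 * A - (2 / r₀ r) * (3 * V r) - r₀ r * I + 2 * A := by
      have expand : (fun x => (H₀ r x - 2 / r₀ r) * (supf r x - r₀ r)) =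
          fun x => (H₀ r x * supf r x - r₀ r * H₀ r x) -
            ((2 / r₀ r) * supf r x - (2 / r₀ r) * r₀ r) := by
        funext x; ring
      rw [hEdef, expand, integral_sub hiAB hiCD, integral_sub hiHS hiB,
        integral_sub hiD hiC, integral_const_mul, integral_const_mul, setIntegral_const,
        hMink r hr, hDiv r hr, ← hIdef]
      have h22 : (2 / r₀ r) * r₀ r = 2 := div_mul_cancel₀ 2 hr₀ne
      rw [smul_eq_mul, h22, measureReal_def, ← hAdef]
      ring
    -- bound E
    have hEbound : |E| ≤ C₂ * r ^ (-1 - τ) * (C₁ * r ^ (1 - τ)) * A := by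
      rw [hEdef]
      have := norm_setIntegral_le_of_norm_le_const (μ := μH[2]) (s := S r)
        (f := fun x => (H₀ r x - 2 / r₀ r) * (supf r x - r₀ r))
        (C := C₂ * r ^ (-1 - τ) * (C₁ * r ^ (1 - τ))) hfin
        (fun x hx => by
          rw [Real.norm_eq_abs, abs_mul]
          exact mul_le_mul (h2 r hr x hx) (h1 r hr x hx) (abs_nonneg _) (by positivity))
      simpa [Real.norm_eq_abs, measureReal_def, ← hAdef] using this
    -- simplify the bound
    have hEbound2 : |E| ≤ C₁ * C₂ * Λ * r ^ (2 - 2 * τ) := by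
      have hAle : A ≤ Λ * r ^ 2 := (hA r hr).2
      have hrpow : C₂ * r ^ (-1 - τ) * (C₁ * r ^ (1 - τ)) * A ≤
          C₂ * r ^ (-1 - τ) * (C₁ * r ^ (1 - τ)) * (Λ * r ^ 2) := by
        apply mul_le_mul_of_nonneg_left hAle (by positivity)
      refine le_trans hEbound (le_trans hrpow (le_of_eq ?_))
      have h2' : r ^ (2 - 2 * τ) = r ^ (-1 - τ) * r ^ (1 - τ) * r ^ (2 : ℕ) := by
        rw [← Real.rpow_natCast r 2, ← Real.rpow_add hr0, ← Real.rpow_add hr0]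
        congr 1
        push_cast
        ring
      rw [h2']
      ring
    -- key identity
    have hkey : I - (-(6 * V r / (r₀ r) ^ 2) + 4 * A / r₀ r) = -(E / r₀ r) := by
      rw [hEeq]
      field_simp
      ring
    rw [hkey, abs_neg, abs_div, abs_of_pos hr₀pos]
    have hlow : r / C₀ ≤ r₀ r := (h0 r hr).1
    have hdiv : |E| / r₀ r ≤ (C₁ * C₂ * Λ * r ^ (2 - 2 * τ)) / (r / C₀) :=
      div_le_div₀ (by positivity) hEbound2 (by positivity) hlow
    refine le_trans hdiv (le_of_eq ?_)
    rw [div_div_eq_mul_div, div_eq_iff (ne_of_gt hr0)]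
    have hsplit : r ^ (2 - 2 * τ) = r ^ (1 - 2 * τ) * r := by
      rw [← Real.rpow_add_one (ne_of_gt hr0) (1 - 2 * τ)]
      congr 1
      ring
    rw [hsplit]; ring
  constructor
  · exact ⟨C₀ * C₁ * C₂ * Λ, by positivity, part1⟩
  · refine ⟨C₀ * C₁ * C₂ * Λ + Cp, by positivity, fun r hr => ?_⟩
    have hx := part1 r hr
    have hy := hp r hr
    set I : ℝ := ∫ x in S r, H₀ r x ∂μH[2]
    set A : ℝ := (μH[2] (S r) : ENNReal).toReal
    have havg : I - (4 * π * r₀ r + A / r₀ r) =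
        ((I - (-(6 * V r / (r₀ r) ^ 2) + 4 * A / r₀ r)) +
         (I - (6 * V r / (r₀ r) ^ 2 + 8 * π * r₀ r - 2 * A / r₀ r))) / 2 := by
      ring
    rw [havg, abs_div, abs_two]
    have h3 := abs_add_le (I - (-(6 * V r / (r₀ r) ^ 2) + 4 * A / r₀ r))
      (I - (6 * V r / (r₀ r) ^ 2 + 8 * π * r₀ r - 2 * A / r₀ r))
    have h4 : C₀ * C₁ * C₂ * Λ * r ^ (1 - 2 * τ) + Cp * r ^ (1 - 2 * τ) =
        (C₀ * C₁ * C₂ * Λ + Cp) * r ^ (1 - 2 * τ) := by ring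
    have h5 : (0 : ℝ) ≤ (C₀ * C₁ * C₂ * Λ + Cp) * r ^ (1 - 2 * τ) := by positivity
    linarith
end
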